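/- arXiv:1601.06119 — 2 statements merged into one kernel-verified Lean document; each statement's English description precedes it below -/
import Mathlib

section
/- Let h : BitVec b → BitVec b be injective, k̃ : BitVec b, x a coordinate with |x| < L, x' a padded coordinate of x, and y = hc(k̃, x') the return address generated from x. Then for all coordinates c1, c2 with cpl(x', c_i) ≤ |x| and c_i ≠ x (i = 1, 2): δ_CPL(x, c1) < δ_CPL(x, c2) if and only if δ_CPL(y, hc(k̃, c1)) < δ_CPL(y, hc(k̃, c2)), and δ_CPL(x, c1) = δ_CPL(x, c2) if and only if δ_CPL(y, hc(k̃, c1)) = δ_CPL(y, hc(k̃, c2)); i.e., the return address is route preserving with respect to the common-prefix-length based distance δ_CPL. -/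
/-!
The hash cascade of an injective hash preserves equality, lengths and common prefix lengths, so
`δ_CPL (hc k̃ x') (hc k̃ c) = δ_CPL x' c`. From a fixed base point, `δ_CPL` orders targets
lexicographically: a longer common prefix first, then a shorter target; the base point only
enters through its own length, which does not affect this order. Finally, as `cpl x' cᵢ ≤ |x|`
and `x <+: x'`, the base points `x` and `x'` have the same common prefix with each `cᵢ`.
-/

/-- The common prefix length of two lists. -/
def cpl {α : Type*} [DecidableEq α] : List α → List α → ℕ
  | a :: as, b :: bs => if a = b then cpl as bs + 1 else 0
  | _, _ => 0

/-- The common-prefix-length based distance. -/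
def deltaCPL {α : Type*} [DecidableEq α] (L : ℕ) (x y : List α) : ℚ :=
  if x = y then 0
  else (L : ℚ) - cpl x y - 1 / ((x.length : ℚ) + y.length + 1)

/-- The hash cascade. -/
def hc {b : ℕ} (h : BitVec b → BitVec b) : BitVec b → List (BitVec b) → List (BitVec b)
  | _, [] => []
  | k, a :: as => h (k ^^^ a) :: hc h (h (k ^^^ a)) as

section HashCascade

variable {b : ℕ} {h : BitVec b → BitVec b}

theorem hc_length (k : BitVec b) (l : List (BitVec b)) : (hc h k l).length = l.length := by
  induction l generalizing k with
  | nil => rfl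
  | cons a as ih => simp [hc, ih]

theorem hash_xor_eq_hash_xor_iff (hinj : Function.Injective h) (k a c : BitVec b) :
    h (k ^^^ a) = h (k ^^^ c) ↔ a = c :=
  hinj.eq_iff.trans (BitVec.xor_right_inj k)

theorem hc_injective (hinj : Function.Injective h) (k : BitVec b) :
    Function.Injective (hc h k) := by
  intro l m he
  induction l generalizing k m with
  | nil => cases m <;> simp_all [hc]
  | cons a as ih =>
    cases m with
    | nil => simp [hc] at he
    | cons c cs =>
      obtain ⟨hhead, htail⟩ := List.cons.inj he
      obtain rfl := (hash_xor_eq_hash_xor_iff hinj k a c).1 hhead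
      rw [ih _ htail]

theorem cpl_hc (hinj : Function.Injective h) (k : BitVec b) (l m : List (BitVec b)) :
    cpl (hc h k l) (hc h k m) = cpl l m := by
  induction l generalizing k m with
  | nil => cases m <;> rfl
  | cons a as ih =>
    cases m with
    | nil => rfl
    | cons c cs =>
      simp only [hc, cpl, hash_xor_eq_hash_xor_iff hinj]
      split_ifs with hac
      · subst hac
        rw [ih]
      · rfl

theorem deltaCPL_hc (hinj : Function.Injective h) (L : ℕ) (k : BitVec b)
    (l m : List (BitVec b)) : deltaCPL L (hc h k l) (hc h k m) = deltaCPL L l m := by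
  simp only [deltaCPL, (hc_injective hinj k).eq_iff, cpl_hc hinj, hc_length]

end HashCascade

section CommonPrefix

variable {α : Type*} [DecidableEq α]

theorem cpl_self (l : List α) : cpl l l = l.length := by
  induction l with
  | nil => rfl
  | cons a as ih => simp [cpl, ih]

theorem cpl_of_isPrefix {x x' : List α} (hpre : x <+: x') (c : List α) :
    cpl x c = min x.length (cpl x' c) := by
  induction x generalizing x' c with
  | nil => simp [cpl]
  | cons a as ih =>
    obtain ⟨t, rfl⟩ := hpre
    cases c with
    | nil => simp [cpl]
    | cons d ds =>
      by_cases had : a = d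
      · subst had
        simp [cpl, ih ⟨t, rfl⟩ ds]
      · simp [cpl, had]

theorem ne_of_isPrefix_of_cpl_le {x x' c : List α} (hpre : x <+: x')
    (hcpl : cpl x' c ≤ x.length) (hne : c ≠ x) : x' ≠ c := by
  rintro rfl
  rw [cpl_self] at hcpl
  exact hne (hpre.eq_of_length (le_antisymm hpre.length_le hcpl)).symm

end CommonPrefix

section Lexicographic

variable {R : Type*} [Field R] [LinearOrder R] [IsStrictOrderedRing R]

theorem natCast_add_lt_natCast_add_iff {n₁ n₂ : ℕ} {e₁ e₂ : R}
    (he₁ : e₁ ∈ Set.Ioc 0 1) (he₂ : e₂ ∈ Set.Ioc 0 1) :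
    (n₁ : R) + e₁ < n₂ + e₂ ↔ n₁ < n₂ ∨ n₁ = n₂ ∧ e₁ < e₂ := by
  obtain ⟨he₁₀, he₁₁⟩ := he₁
  obtain ⟨he₂₀, he₂₁⟩ := he₂
  constructor
  · intro hlt
    rcases lt_trichotomy n₁ n₂ with hn | rfl | hn
    · exact .inl hn
    · exact .inr ⟨rfl, by linarith⟩
    · have : (n₂ : R) + 1 ≤ n₁ := by exact_mod_cast hn
      linarith
  · rintro (hn | ⟨rfl, he⟩)
    · have : (n₁ : R) + 1 ≤ n₂ := by exact_mod_cast hn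
      linarith
    · linarith

theorem natCast_add_eq_natCast_add_iff {n₁ n₂ : ℕ} {e₁ e₂ : R}
    (he₁ : e₁ ∈ Set.Ioc 0 1) (he₂ : e₂ ∈ Set.Ioc 0 1) :
    (n₁ : R) + e₁ = n₂ + e₂ ↔ n₁ = n₂ ∧ e₁ = e₂ := by
  constructor
  · intro heq
    rcases lt_trichotomy n₁ n₂ with hn | rfl | hn
    · exact absurd heq ((natCast_add_lt_natCast_add_iff he₁ he₂).2 (.inl hn)).ne
    · exact ⟨rfl, by simpa using heq⟩
    · exact absurd heq ((natCast_add_lt_natCast_add_iff he₂ he₁).2 (.inl hn)).ne'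
  · rintro ⟨rfl, rfl⟩
    rfl

end Lexicographic

section Distance

variable {α : Type*} [DecidableEq α]

theorem one_div_natCast_add_add_one_mem_Ioc (s m : ℕ) : 1 / ((s : ℚ) + m + 1) ∈ Set.Ioc 0 1 :=
  ⟨by positivity, div_le_one_of_le₀ (le_add_of_nonneg_left (by positivity)) (by positivity)⟩

theorem one_div_natCast_add_add_one_lt_iff (s m₁ m₂ : ℕ) :
    1 / ((s : ℚ) + m₁ + 1) < 1 / ((s : ℚ) + m₂ + 1) ↔ m₂ < m₁ := by
  rw [one_div_lt_one_div (by positivity) (by positivity)]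
  norm_cast
  omega

theorem deltaCPL_eq_sub_cpl_add (L : ℕ) {x c : List α} (hne : x ≠ c) :
    deltaCPL L x c = L - ((cpl x c : ℚ) + 1 / ((x.length : ℚ) + c.length + 1)) := by
  rw [deltaCPL, if_neg hne]
  ring

theorem deltaCPL_lt_deltaCPL_iff (L : ℕ) {x c₁ c₂ : List α} (hne₁ : x ≠ c₁) (hne₂ : x ≠ c₂) :
    deltaCPL L x c₁ < deltaCPL L x c₂ ↔
      cpl x c₂ < cpl x c₁ ∨ cpl x c₂ = cpl x c₁ ∧ c₁.length < c₂.length := by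
  rw [deltaCPL_eq_sub_cpl_add L hne₁, deltaCPL_eq_sub_cpl_add L hne₂, sub_lt_sub_iff_left,
    natCast_add_lt_natCast_add_iff (one_div_natCast_add_add_one_mem_Ioc _ _)
      (one_div_natCast_add_add_one_mem_Ioc _ _), one_div_natCast_add_add_one_lt_iff]

theorem deltaCPL_eq_deltaCPL_iff (L : ℕ) {x c₁ c₂ : List α} (hne₁ : x ≠ c₁) (hne₂ : x ≠ c₂) :
    deltaCPL L x c₁ = deltaCPL L x c₂ ↔ cpl x c₁ = cpl x c₂ ∧ c₁.length = c₂.length := by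
  rw [deltaCPL_eq_sub_cpl_add L hne₁, deltaCPL_eq_sub_cpl_add L hne₂, sub_right_inj,
    natCast_add_eq_natCast_add_iff (one_div_natCast_add_add_one_mem_Ioc _ _)
      (one_div_natCast_add_add_one_mem_Ioc _ _), one_div, one_div, inv_inj, add_left_inj, add_right_inj,
    Nat.cast_inj]

end Distance

theorem return_address_route_preserving_CPL_general {b L : ℕ}
    (h : BitVec b → BitVec b) (hinj : Function.Injective h) (k : BitVec b)
    (x x' : List (BitVec b)) (hpre : x <+: x')
    (c1 c2 : List (BitVec b)) (h1 : cpl x' c1 ≤ x.length) (h2 : cpl x' c2 ≤ x.length)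
    (hne1 : c1 ≠ x) (hne2 : c2 ≠ x) :
    (deltaCPL L x c1 < deltaCPL L x c2 ↔
      deltaCPL L (hc h k x') (hc h k c1) < deltaCPL L (hc h k x') (hc h k c2)) ∧
    (deltaCPL L x c1 = deltaCPL L x c2 ↔
      deltaCPL L (hc h k x') (hc h k c1) = deltaCPL L (hc h k x') (hc h k c2)) := by
  have hcpl₁ : cpl x c1 = cpl x' c1 := by rw [cpl_of_isPrefix hpre]; omega
  have hcpl₂ : cpl x c2 = cpl x' c2 := by rw [cpl_of_isPrefix hpre]; omega
  have hne₁' := ne_of_isPrefix_of_cpl_le hpre h1 hne1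
  have hne₂' := ne_of_isPrefix_of_cpl_le hpre h2 hne2
  rw [deltaCPL_hc hinj, deltaCPL_hc hinj,
    deltaCPL_lt_deltaCPL_iff L hne1.symm hne2.symm, deltaCPL_lt_deltaCPL_iff L hne₁' hne₂',
    deltaCPL_eq_deltaCPL_iff L hne1.symm hne2.symm, deltaCPL_eq_deltaCPL_iff L hne₁' hne₂',
    hcpl₁, hcpl₂]
  exact ⟨.rfl, .rfl⟩

/-- For an injective `h`, a coordinate `x` with `|x| < L`, a padded coordinate `x'` of `x`,
and the return address `y = hc k̃ x'`: for all coordinates `c1, c2` distinct from `x` with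
`cpl x' cᵢ ≤ |x|`, comparisons of `δ_CPL` using the return address agree with comparisons
using the original coordinate: the return address is route preserving w.r.t. `δ_CPL`. -/
theorem return_address_route_preserving_CPL {b L : ℕ}
    (h : BitVec b → BitVec b) (hinj : Function.Injective h) (k : BitVec b)
    (x x' : List (BitVec b)) (hlen : x.length < L) (hpre : x <+: x')
    (hplen : x'.length = L)
    (c1 c2 : List (BitVec b)) (h1 : cpl x' c1 ≤ x.length) (h2 : cpl x' c2 ≤ x.length)
    (hne1 : c1 ≠ x) (hne2 : c2 ≠ x) :
    (deltaCPL L x c1 < deltaCPL L x c2 ↔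
      deltaCPL L (hc h k x') (hc h k c1) < deltaCPL L (hc h k x') (hc h k c2)) ∧
    (deltaCPL L x c1 = deltaCPL L x c2 ↔
      deltaCPL L (hc h k x') (hc h k c1) = deltaCPL L (hc h k x') (hc h k c2)) :=
  return_address_route_preserving_CPL_general h hinj k x x' hpre c1 c2 h1 h2 hne1 hne2
end

section
/- Let e, c1, c2 be coordinates with |e| < L, |c1| < L and |c2| < L. If δ_TD(c2, e) < δ_TD(c1, e) and δ_CPL(c2, e) ≥ δ_CPL(c1, e), then cpl(c2, e) < cpl(c1, e) and |c2| < |c1|. (This is the key step showing that any routing step that decreases the tree distance δ_TD but does not decrease δ_CPL must strictly decrease both the common prefix length with the destination and the coordinate length.) -/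
/-- The tree distance `δ_TD x y = |x| + |y| - 2 · cpl x y`. -/
def deltaTD {α : Type*} [DecidableEq α] (x y : List α) : ℤ :=
  (x.length : ℤ) + y.length - 2 * cpl x y

/-!
A step that does not decrease `δ_CPL = L - cpl - 1/(|c| + |e| + 1)` cannot increase `cpl`, because
the fractional part lies in `(0, 1]`; if it keeps `cpl`, the fractional part cannot grow, so `|c|`
does not drop. A drop of `δ_TD = |c| + |e| - 2 cpl` therefore forces `cpl` to drop, and then `|c|`
drops as well, by more than twice the drop of `cpl`. Since `cpl ≤ |e| < L`, `δ_CPL` is positive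
away from `e`, so `c1 ≠ e` (forced by `δ_TD ≥ 0`) gives `c2 ≠ e`.
-/

theorem lt_or_eq_and_le_of_add_one_div_le {a b m n : ℕ}
    (h : (a : ℚ) + 1 / (m + 1) ≤ b + 1 / (n + 1)) : a < b ∨ a = b ∧ n ≤ m := by
  have hm : 0 < 1 / ((m : ℚ) + 1) := by positivity
  have hn : 1 / ((n : ℚ) + 1) ≤ 1 := by
    rw [div_le_one (by positivity)]
    linarith [n.cast_nonneg (α := ℚ)]
  have hab : a ≤ b := by
    have : (a : ℚ) < b + 1 := by linarith
    exact Nat.lt_succ_iff.mp (by exact_mod_cast this)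
  rcases hab.lt_or_eq with hlt | rfl
  · exact .inl hlt
  · have : (n : ℚ) + 1 ≤ m + 1 :=
      (one_div_le_one_div (by positivity) (by positivity)).mp (by linarith)
    exact .inr ⟨rfl, by exact_mod_cast (by linarith : (n : ℚ) ≤ m)⟩

section

variable {α : Type*} [DecidableEq α]

theorem cpl_le_length_left : ∀ x y : List α, cpl x y ≤ x.length
  | [], _ | _ :: _, [] => by simp [cpl]
  | a :: as, b :: bs => by
    unfold cpl
    split_ifs <;> simp [cpl_le_length_left as bs]

theorem cpl_le_length_right : ∀ x y : List α, cpl x y ≤ y.length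
  | [], _ | _ :: _, [] => by simp [cpl]
  | a :: as, b :: bs => by
    unfold cpl
    split_ifs <;> simp [cpl_le_length_right as bs]

theorem cpl_self_s8 : ∀ x : List α, cpl x x = x.length
  | [] => by simp [cpl]
  | a :: as => by simp [cpl, cpl_self_s8 as]

theorem deltaTD_self (x : List α) : deltaTD x x = 0 := by
  simp only [deltaTD, cpl_self_s8]
  ring

theorem deltaTD_nonneg (x y : List α) : 0 ≤ deltaTD x y := by
  have := cpl_le_length_left x y
  have := cpl_le_length_right x y
  simp only [deltaTD]
  omega

theorem deltaTD_lt_deltaTD_iff (x y z : List α) :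
    deltaTD x z < deltaTD y z ↔ x.length + 2 * cpl y z < y.length + 2 * cpl x z := by
  simp only [deltaTD]
  omega

theorem deltaCPL_self (L : ℕ) (x : List α) : deltaCPL L x x = 0 := by
  simp [deltaCPL]

theorem deltaCPL_of_ne {L : ℕ} {x y : List α} (hxy : x ≠ y) :
    deltaCPL L x y = L - cpl x y - 1 / ((x.length : ℚ) + y.length + 1) :=
  if_neg hxy

theorem deltaCPL_pos {L : ℕ} {x y : List α} (hy : y.length < L) (hxy : x ≠ y) :
    0 < deltaCPL L x y := by
  have hcpl : (cpl x y : ℚ) + 1 ≤ L := by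
    exact_mod_cast (cpl_le_length_right x y).trans_lt hy
  have hlen : 0 < x.length + y.length := by
    rcases x with _ | _ <;> rcases y with _ | _ <;> simp_all
  have hfrac : 1 / ((x.length : ℚ) + y.length + 1) < 1 := by
    rw [div_lt_one (by positivity)]
    exact_mod_cast Nat.lt_add_of_pos_left hlen
  rw [deltaCPL_of_ne hxy]
  linarith

end

theorem TD_not_CPL_step_general {α : Type*} [DecidableEq α] (L : ℕ) (e c1 c2 : List α)
    (he : e.length < L)
    (hTD : deltaTD c2 e < deltaTD c1 e)
    (hCPL : deltaCPL L c1 e ≤ deltaCPL L c2 e) :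
    cpl c2 e < cpl c1 e ∧ c2.length < c1.length := by
  have hc1e : c1 ≠ e := by
    rintro rfl
    exact (deltaTD_nonneg c2 c1).not_gt (deltaTD_self c1 ▸ hTD)
  have hc2e : c2 ≠ e := by
    rintro rfl
    exact (deltaCPL_pos he hc1e).not_ge (deltaCPL_self L c2 ▸ hCPL)
  rw [deltaCPL_of_ne hc1e, deltaCPL_of_ne hc2e] at hCPL
  rw [deltaTD_lt_deltaTD_iff] at hTD
  rcases lt_or_eq_and_le_of_add_one_div_le (a := cpl c2 e) (b := cpl c1 e)
      (m := c2.length + e.length) (n := c1.length + e.length) (by push_cast; linarith) with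
    hlt | ⟨heq, hlen⟩
  · exact ⟨hlt, by omega⟩
  · omega

/-- If a routing step decreases the tree distance `δ_TD` to the destination `e` but does
not decrease `δ_CPL`, then it strictly decreases both the common prefix length with `e`
and the coordinate length. -/
theorem TD_not_CPL_step {α : Type*} [DecidableEq α] (L : ℕ) (e c1 c2 : List α)
    (he : e.length < L) (hc1 : c1.length < L) (hc2 : c2.length < L)
    (hTD : deltaTD c2 e < deltaTD c1 e)
    (hCPL : deltaCPL L c1 e ≤ deltaCPL L c2 e) :
    cpl c2 e < cpl c1 e ∧ c2.length < c1.length :=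
  TD_not_CPL_step_general L e c1 c2 he hTD hCPL
end
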